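/- For any octonions a, b, c, the real part of (ab)c equals the real part of a(bc). -/

import Mathlib

noncomputable section

open Quaternion

/-- The octonions, as the Cayley–Dickson double of the quaternions. -/
@[ext] structure Octonion : Type where
  q1 : Quaternion ℝ
  q2 : Quaternion ℝ

namespace Octonion

def equivProd : Octonion ≃ Quaternion ℝ × Quaternion ℝ :=
  ⟨fun x => (x.q1, x.q2), fun p => ⟨p.1, p.2⟩, fun _ => rfl, fun _ => rfl⟩

instance : AddCommGroup Octonion := equivProd.addCommGroup
instance : Module ℝ Octonion := equivProd.module ℝ
instance : TopologicalSpace Octonion :=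
  TopologicalSpace.induced equivProd inferInstance

instance : One Octonion := ⟨⟨1, 0⟩⟩

/-- Cayley–Dickson multiplication: `(a,b)(c,d) = (ac - d̄b, da + b c̄)`. -/
instance : Mul Octonion :=
  ⟨fun x y => ⟨x.q1 * y.q1 - star y.q2 * x.q2, y.q2 * x.q1 + x.q2 * star y.q1⟩⟩

/-- Octonionic conjugation. -/
def conj (x : Octonion) : Octonion := ⟨star x.q1, -x.q2⟩

/-- The real part of an octonion. -/
def re (x : Octonion) : ℝ := x.q1.re

/-- The imaginary part of an octonion. -/
def im (x : Octonion) : Octonion := (2⁻¹ : ℝ) • (x - conj x)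

/-- The squared norm `|x|²` of an octonion. -/
def normSq (x : Octonion) : ℝ := Quaternion.normSq x.q1 + Quaternion.normSq x.q2

/-- The inverse of an octonion (junk value `0` at `0`). -/
def inv (x : Octonion) : Octonion := (normSq x)⁻¹ • conj x

end Octonion

/-! Expanding both sides in quaternion components gives `Re(a₁b₁c₁)` minus three real parts of
triple quaternion products, and these agree pairwise up to a cyclic permutation of the factors,
which does not change the real part of a product of quaternions. -/

namespace Quaternion

variable {R : Type*} [CommRing R]

theorem re_mul_comm (a b : ℍ[R]) : (a * b).re = (b * a).re := by
  simp only [re_mul]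
  ring

theorem re_mul_mul_cycle (a b c : ℍ[R]) : (a * (b * c)).re = (c * (a * b)).re := by
  rw [← mul_assoc, re_mul_comm]

end Quaternion

namespace Octonion

lemma mul_q1 (x y : Octonion) : (x * y).q1 = x.q1 * y.q1 - star y.q2 * x.q2 := rfl

lemma mul_q2 (x y : Octonion) : (x * y).q2 = y.q2 * x.q1 + x.q2 * star y.q1 := rfl

end Octonion

/-- For any octonions `a, b, c`, `Re((ab)c) = Re(a(bc))`. -/
theorem octonion_re_mul_assoc (a b c : Octonion) :
    Octonion.re ((a * b) * c) = Octonion.re (a * (b * c)) := by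
  simp only [Octonion.re, Octonion.mul_q1, Octonion.mul_q2, star_add, star_mul, star_star,
    mul_sub, sub_mul, add_mul, mul_add, re_sub, re_add, mul_assoc]
  rw [re_mul_mul_cycle (star b.q2), re_mul_mul_cycle _ b.q2, re_mul_mul_cycle _ a.q2]
  ring
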